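/- arXiv:2605.12656 — 4 statements merged into one kernel-verified Lean document; each statement's English description precedes it below -/
import Mathlib

section
/- Let f be a continuous real-valued function on [-1,1] and let d ≥ 0 be a natural number. Then the best uniform approximation error of f by polynomials of degree at most d satisfies E_d(f) := inf_{deg p ≤ d} sup_{x ∈ [-1,1]} |f(x) - p(x)| ≥ (π/4)·|a_{d+1}|, where a_{d+1} is the (d+1)-st Chebyshev coefficient of f. -/
/-!
Subtracting a polynomial `p` of degree at most `d` does not change `a_{d+1}`, because `T_{d+1}` is
orthogonal to all polynomials of lower degree for the Chebyshev weight `(1 - x²)^(-1/2)`. Hence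
`|a_{d+1}| ≤ (2/π) · sup |f - p| · ∫ |T_{d+1}| (1 - x²)^(-1/2) dx`, and the last integral is
`∫₀^π |cos((d+1)θ)| dθ = 2`.
-/

noncomputable def chebCoeff (f : ℝ → ℝ) (k : ℕ) : ℝ :=
  (2 / Real.pi) * ∫ x in (-1:ℝ)..1,
    f x * (Polynomial.Chebyshev.T ℝ k).eval x / Real.sqrt (1 - x ^ 2)

noncomputable def bestApproxError (f : ℝ → ℝ) (d : ℕ) : ℝ :=
  ⨅ p : {p : Polynomial ℝ // p.natDegree ≤ d},
    ⨆ x : Set.Icc (-1:ℝ) 1, |f (x : ℝ) - (p : Polynomial ℝ).eval (x : ℝ)|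

open Polynomial Polynomial.Chebyshev Real MeasureTheory Set

lemma le_iSup_of_isCompact_of_continuousOn {α : Type*} [TopologicalSpace α] {s : Set α}
    (hs : IsCompact s) {g : α → ℝ} (hg : ContinuousOn g s) {x : α} (hx : x ∈ s) :
    g x ≤ ⨆ y : s, g y :=
  le_ciSup (f := fun y : s => g y) (by simpa [image_eq_range] using hs.bddAbove_image hg) ⟨x, hx⟩

lemma integral_abs_cos_nat_mul {n : ℕ} (hn : n ≠ 0) : ∫ θ in 0..π, |cos (n * θ)| = 2 := by
  have hper : Function.Periodic (fun u => |cos u|) π := fun u => by simp [cos_add_pi]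
  have hint : ∀ a b, IntervalIntegrable (fun u => |cos u|) volume a b :=
    fun a b => continuous_cos.abs.intervalIntegrable a b
  -- one period of `|cos|` is `[-π/2, π/2]`, where `|cos| = cos`
  have hperiod : ∫ u in 0..π, |cos u| = 2 := by
    have hcos : EqOn (fun u => |cos u|) cos (uIcc (-(π / 2)) (-(π / 2) + π)) := fun u hu => by
      rw [uIcc_of_le (by linarith [pi_pos])] at hu
      exact abs_of_nonneg (cos_nonneg_of_mem_Icc ⟨hu.1, by linarith [hu.2]⟩)
    rw [← zero_add π, hper.intervalIntegral_add_eq 0 (-(π / 2)),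
      intervalIntegral.integral_congr hcos]
    norm_num [integral_cos]
  have hn' : (n : ℝ) ≠ 0 := Nat.cast_ne_zero.mpr hn
  rw [intervalIntegral.integral_comp_mul_left (fun u => |cos u|) hn', mul_zero]
  have hperiods := hper.intervalIntegral_add_zsmul_eq n 0 hint
  simp only [zero_add, natCast_zsmul, nsmul_eq_mul] at hperiods
  rw [hperiods, hperiod, smul_eq_mul]
  field_simp

namespace Polynomial.Chebyshev

lemma ae_mem_Icc_measureT : ∀ᵐ x ∂measureT, x ∈ Icc (-1 : ℝ) 1 := by
  unfold measureT
  filter_upwards [ae_restrict_mem measurableSet_Ioc] with x hx using Ioc_subset_Icc_self hx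

lemma integral_pow_mul_eval_T_measureT_of_lt {j n : ℕ} (h : j < n) :
    ∫ x, x ^ j * (T ℝ n).eval x ∂measureT = 0 := by
  induction j generalizing n with
  | zero => simpa using integral_eval_T_real_measureT_of_ne_zero (n := n) (by omega)
  | succ j ih =>
    obtain ⟨m, rfl⟩ : ∃ m, n = m + 1 := ⟨n - 1, by omega⟩
    have hrec (x : ℝ) : x ^ (j + 1) * (T ℝ (m + 1 : ℕ)).eval x
        = (x ^ j * (T ℝ (m + 2 : ℕ)).eval x + x ^ j * (T ℝ m).eval x) / 2 := by
      have := congrArg (eval x) (T_add_two ℝ (m : ℤ))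
      simp only [eval_sub, eval_mul, eval_X, eval_ofNat] at this
      push_cast
      linear_combination (-x ^ j / 2) * this
    simp_rw [hrec]
    rw [integral_div, integral_add (integrable_measureT (by fun_prop))
      (integrable_measureT (by fun_prop)), ih (by omega), ih (by omega)]
    simp

lemma integral_eval_mul_eval_T_measureT_of_natDegree_lt {p : ℝ[X]} {n : ℕ}
    (hp : p.natDegree < n) : ∫ x, p.eval x * (T ℝ n).eval x ∂measureT = 0 := by
  simp_rw [eval_eq_sum_range (p := p), Finset.sum_mul, mul_assoc]
  rw [integral_finsetSum _ fun i _ => (integrable_measureT (by fun_prop)).const_mul _]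
  refine Finset.sum_eq_zero fun i hi => ?_
  rw [integral_const_mul, integral_pow_mul_eval_T_measureT_of_lt (by grind), mul_zero]

lemma integral_abs_eval_T_measureT {n : ℕ} (hn : n ≠ 0) :
    ∫ x, |(T ℝ n).eval x| ∂measureT = 2 := by
  simp_rw [integral_measureT_eq_integral_cos, T_real_cos]
  exact_mod_cast integral_abs_cos_nat_mul hn

lemma abs_integral_mul_eval_T_measureT_le {g : ℝ → ℝ} {M : ℝ}
    (hM : ∀ x ∈ Icc (-1 : ℝ) 1, |g x| ≤ M) {n : ℕ} (hn : n ≠ 0) :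
    |∫ x, g x * (T ℝ n).eval x ∂measureT| ≤ 2 * M :=
  calc |∫ x, g x * (T ℝ n).eval x ∂measureT|
    _ ≤ ∫ x, M * |(T ℝ n).eval x| ∂measureT := by
      have hint : Integrable (fun x => |(T ℝ n).eval x|) measureT :=
        integrable_measureT (by fun_prop)
      rw [← norm_eq_abs]
      refine norm_integral_le_of_norm_le (hint.const_mul M) ?_
      filter_upwards [ae_mem_Icc_measureT] with x hx
      rw [norm_mul, norm_eq_abs, norm_eq_abs]
      exact mul_le_mul_of_nonneg_right (hM x hx) (abs_nonneg _)
    _ = 2 * M := by rw [integral_const_mul, integral_abs_eval_T_measureT hn, mul_comm]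

end Polynomial.Chebyshev

lemma chebCoeff_eq_integral_measureT (f : ℝ → ℝ) (k : ℕ) :
    chebCoeff f k = 2 / π * ∫ x, f x * (T ℝ k).eval x ∂measureT := by
  rw [chebCoeff, integral_measureT]
  congr 1
  refine intervalIntegral.integral_congr fun x _ => ?_
  rw [div_eq_mul_inv, sqrt_inv]

lemma chebCoeff_sub_eval_of_natDegree_lt {f : ℝ → ℝ} (hf : ContinuousOn f (Icc (-1) 1))
    {p : ℝ[X]} {k : ℕ} (hp : p.natDegree < k) :
    chebCoeff (fun x => f x - p.eval x) k = chebCoeff f k := by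
  simp_rw [chebCoeff_eq_integral_measureT, sub_mul]
  rw [integral_sub (integrable_measureT (f := fun x => f x * (T ℝ k).eval x) (by fun_prop))
    (integrable_measureT (by fun_prop)), integral_eval_mul_eval_T_measureT_of_natDegree_lt hp,
    sub_zero]

lemma abs_chebCoeff_le {g : ℝ → ℝ} {M : ℝ} (hM : ∀ x ∈ Icc (-1 : ℝ) 1, |g x| ≤ M) {k : ℕ}
    (hk : k ≠ 0) : |chebCoeff g k| ≤ 4 / π * M := by
  rw [chebCoeff_eq_integral_measureT, abs_mul, abs_of_pos (by positivity)]
  calc 2 / π * |∫ x, g x * (T ℝ k).eval x ∂measureT|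
    _ ≤ 2 / π * (2 * M) := by
      gcongr
      exact abs_integral_mul_eval_T_measureT_le hM hk
    _ = 4 / π * M := by ring

lemma pi_div_four_mul_abs_chebCoeff_le {f : ℝ → ℝ} (hf : ContinuousOn f (Icc (-1) 1))
    {p : ℝ[X]} {d : ℕ} (hp : p.natDegree ≤ d) {M : ℝ}
    (hM : ∀ x ∈ Icc (-1 : ℝ) 1, |f x - p.eval x| ≤ M) :
    π / 4 * |chebCoeff f (d + 1)| ≤ M := by
  rw [← chebCoeff_sub_eval_of_natDegree_lt hf (Nat.lt_succ_of_le hp)]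
  calc π / 4 * |chebCoeff (fun x => f x - p.eval x) (d + 1)|
    _ ≤ π / 4 * (4 / π * M) := by
      gcongr
      exact abs_chebCoeff_le hM d.add_one_ne_zero
    _ = M := by field_simp

theorem stmt0 (f : ℝ → ℝ) (hf : ContinuousOn f (Set.Icc (-1) 1)) (d : ℕ) :
    Real.pi / 4 * |chebCoeff f (d + 1)| ≤ bestApproxError f d := by
  have : Nonempty {p : ℝ[X] // p.natDegree ≤ d} := ⟨⟨0, by simp⟩⟩
  refine le_ciInf fun ⟨p, hp⟩ => pi_div_four_mul_abs_chebCoeff_le hf hp fun x hx => ?_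
  exact le_iSup_of_isCompact_of_continuousOn isCompact_Icc
    (g := fun x => |f x - p.eval x|) (hf.sub p.continuousOn).abs hx
end

section
/- Fix c > 0. For ε ∈ (0, 1/2), define d*(c,ε) as the minimum degree of a real polynomial p satisfying |p(x)| ≤ 1 for all x ∈ [-1,1] and sup_{x ∈ [0,1]} |p(x) - e^{c(x-1)}| ≤ ε. Then d*(c,ε) = (log(1/ε)/log log(1/ε))·(1 + o(1)) as ε → 0⁺; that is, the quotient d*(c,ε)·log log(1/ε)/log(1/ε) tends to 1 as ε tends to 0 from the right. -/
/-!
Write `t = log (1 / ε)` and `n = d*(c, ε) + 1`.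

Upper bound: the Taylor polynomial `e^{-c} ∑_{k ≤ d} (c x)^k / k!` is bounded by `1` on `[-1, 1]`
and approximates `e^{c(x-1)}` on `[0, 1]` within `c^{d+1} / (d+1)! ≤ (c e / (d+1))^{d+1}`.

Lower bound: the `n`-th forward difference with step `1 / n` kills polynomials of degree `< n`,
maps `e^{c(x-1)}` to `e^{-c} (e^{c/n} - 1)^n ≥ e^{-c} (c / n)^n` at `0`, and has norm at most `2^n`
times the sup of `|p - f|` over the nodes `k / n`; hence `e^{-c} (c / n)^n ≤ 2^n ε`.

Both bounds say `t = n log n (1 + o(1))`, and inverting gives `n ~ t / log t`.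
-/

open Polynomial Finset Filter Topology Real
open scoped Nat

/-- `dstar c ε`: the minimum degree of a real polynomial `p` with `|p| ≤ 1` on `[-1, 1]`
that approximates `f_c(x) = exp (c*(x-1))` uniformly on `[0, 1]` to error `ε`. -/
noncomputable def dstar (c ε : ℝ) : ℕ :=
  sInf {d : ℕ | ∃ p : Polynomial ℝ, p.natDegree ≤ d ∧
    (∀ x ∈ Set.Icc (-1 : ℝ) 1, |p.eval x| ≤ 1) ∧
    ∀ x ∈ Set.Icc (0 : ℝ) 1, |p.eval x - Real.exp (c * (x - 1))| ≤ ε}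

theorem norm_fwdDiff_iter_le {M G : Type*} [AddCommMonoid M] [SeminormedAddCommGroup G]
    (h : M) (f : M → G) (n : ℕ) (y : M) {ε : ℝ} (hf : ∀ k ≤ n, ‖f (y + k • h)‖ ≤ ε) :
    ‖(fwdDiff h)^[n] f y‖ ≤ 2 ^ n * ε := by
  rw [fwdDiff_iter_eq_sum_shift]
  calc ‖∑ k ∈ range (n + 1), ((-1 : ℤ) ^ (n - k) * n.choose k) • f (y + k • h)‖
      ≤ ∑ k ∈ range (n + 1), (n.choose k : ℝ) * ε := by
        refine norm_sum_le_of_le _ fun k hk => (norm_zsmul_le _ _).trans ?_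
        rw [norm_mul, norm_pow, norm_neg, norm_one, one_pow, one_mul, Int.norm_natCast]
        exact mul_le_mul_of_nonneg_left (hf k (Nat.lt_succ_iff.mp (mem_range.mp hk)))
          (Nat.cast_nonneg _)
    _ = 2 ^ n * ε := by rw [← sum_mul, ← Nat.cast_sum, Nat.sum_range_choose, Nat.cast_pow,
          Nat.cast_ofNat]

theorem fwdDiff_iter_exp_mul (a h x : ℝ) (n : ℕ) :
    (fwdDiff h)^[n] (fun y => exp (a * y)) x = (exp (a * h) - 1) ^ n * exp (a * x) :=
  fwdDiff_addChar_eq ⟨fun y => exp (a * y), by simp, fun x y => by simp [mul_add, exp_add]⟩ x h n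

theorem exp_neg_mul_exp_div_sub_one_pow_le_of_approx {c ε : ℝ} {p : ℝ[X]} {n : ℕ} (hn : 0 < n)
    (hp : p.natDegree < n)
    (happrox : ∀ x ∈ Set.Icc (0 : ℝ) 1, |p.eval x - exp (c * (x - 1))| ≤ ε) :
    exp (-c) * (exp (c / n) - 1) ^ n ≤ 2 ^ n * ε := by
  set q : ℝ[X] := p.comp (C (n : ℝ)⁻¹ * X)
  have hq : (-q).natDegree < n := by
    rw [natDegree_neg]
    refine natDegree_comp_le.trans_lt ?_
    rw [natDegree_C_mul_X _ (inv_ne_zero (Nat.cast_ne_zero.mpr hn.ne')), mul_one]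
    exact hp
  set g : ℝ → ℝ := exp (-c) • (fun y => exp (c / n * y)) + (-q).eval
  have hΔ : (fwdDiff 1)^[n] g 0 = exp (-c) * (exp (c / n) - 1) ^ n := by
    rw [fwdDiff_iter_add, fwdDiff_iter_const_smul, fwdDiff_iter_eq_zero_of_degree_lt hq]
    simp [fwdDiff_iter_exp_mul]
  have hg : ∀ k ≤ n, ‖g (0 + k • 1)‖ ≤ ε := by
    intro k hk
    have hx : (k : ℝ) / n ∈ Set.Icc (0 : ℝ) 1 :=
      ⟨by positivity, div_le_one_of_le₀ (Nat.cast_le.mpr hk) (Nat.cast_nonneg n)⟩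
    have hgk : g (0 + k • 1) = exp (c * ((k : ℝ) / n - 1)) - p.eval ((k : ℝ) / n) := by
      simp only [g, q, Pi.add_apply, Pi.smul_apply, eval_neg, eval_comp, eval_mul, eval_C, eval_X,
        smul_eq_mul, nsmul_eq_mul, mul_one, zero_add, ← exp_add]
      ring_nf
    rw [hgk, Real.norm_eq_abs, abs_sub_comm]
    exact happrox _ hx
  calc exp (-c) * (exp (c / n) - 1) ^ n ≤ ‖(fwdDiff 1)^[n] g 0‖ := hΔ ▸ le_norm_self _
    _ ≤ 2 ^ n * ε := norm_fwdDiff_iter_le 1 g n 0 hg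

theorem exp_sub_sum_range_le {y : ℝ} (hy : 0 ≤ y) (n : ℕ) :
    exp y - ∑ k ∈ range n, y ^ k / k ! ≤ y ^ n / n ! * exp y := by
  have hsum := summable_pow_div_factorial y
  have hexp : exp y = ∑' k : ℕ, y ^ k / k ! := by rw [exp_eq_exp_ℝ, NormedSpace.exp_eq_tsum_div]
  nth_rw 1 [hexp]
  rw [← hsum.sum_add_tsum_nat_add n, add_sub_cancel_left, hexp, ← tsum_mul_left]
  refine (summable_nat_add_iff n).mpr hsum |>.tsum_le_tsum (fun k => ?_)
    ((summable_pow_div_factorial y).mul_left _)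
  have hfac : ((k + n)! : ℝ) ≥ (n ! * k ! : ℕ) := by
    exact_mod_cast Nat.le_of_dvd (Nat.factorial_pos _)
      (add_comm k n ▸ Nat.factorial_mul_factorial_dvd_factorial_add n k)
  calc y ^ (k + n) / (k + n)! ≤ y ^ (k + n) / (n ! * k ! : ℕ) := by gcongr
    _ = y ^ n / n ! * (y ^ k / k !) := by push_cast; rw [pow_add]; field_simp

noncomputable def expTaylor (c : ℝ) (n : ℕ) : ℝ[X] :=
  C (exp (-c)) * ∑ k ∈ range n, C (c ^ k / k !) * X ^ k

theorem eval_expTaylor (c x : ℝ) (n : ℕ) :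
    (expTaylor c n).eval x = exp (-c) * ∑ k ∈ range n, (c * x) ^ k / k ! := by
  simp [expTaylor, eval_finsetSum, mul_pow, div_mul_eq_mul_div]

theorem natDegree_expTaylor_le (c : ℝ) (d : ℕ) : (expTaylor c (d + 1)).natDegree ≤ d := by
  refine natDegree_C_mul_le _ _ |>.trans <| natDegree_sum_le_of_forall_le _ _ fun k hk => ?_
  exact natDegree_C_mul_X_pow_le _ _ |>.trans (Nat.lt_succ_iff.mp (mem_range.mp hk))

theorem abs_eval_expTaylor_le_one {c x : ℝ} (hc : 0 ≤ c) (hx : |x| ≤ 1) (n : ℕ) :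
    |(expTaylor c n).eval x| ≤ 1 := by
  rw [eval_expTaylor, abs_mul, abs_of_pos (exp_pos _)]
  calc exp (-c) * |∑ k ∈ range n, (c * x) ^ k / k !|
      ≤ exp (-c) * ∑ k ∈ range n, c ^ k / k ! := by
        gcongr
        refine (abs_sum_le_sum_abs _ _).trans (sum_le_sum fun k _ => ?_)
        rw [abs_div, abs_pow, abs_mul, abs_of_nonneg hc, Nat.abs_cast]
        gcongr
        exact mul_le_of_le_one_right hc hx
    _ ≤ exp (-c) * exp c := by gcongr; exact sum_le_exp_of_nonneg hc n
    _ = 1 := by rw [← exp_add, neg_add_cancel, exp_zero]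

theorem abs_eval_expTaylor_sub_le {c x : ℝ} (hc : 0 ≤ c) (hx : x ∈ Set.Icc (0 : ℝ) 1) (n : ℕ) :
    |(expTaylor c n).eval x - exp (c * (x - 1))| ≤ c ^ n / n ! := by
  have hcx : 0 ≤ c * x := mul_nonneg hc hx.1
  have hexp : exp (c * (x - 1)) = exp (-c) * exp (c * x) := by rw [← exp_add]; ring_nf
  rw [eval_expTaylor, hexp, ← mul_sub, abs_mul, abs_of_pos (exp_pos _), abs_sub_comm,
    abs_of_nonneg (sub_nonneg.mpr (sum_le_exp_of_nonneg hcx n))]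
  calc exp (-c) * (exp (c * x) - ∑ k ∈ range n, (c * x) ^ k / k !)
      ≤ exp (-c) * (c ^ n / n ! * exp c) := by
        gcongr
        refine (exp_sub_sum_range_le hcx n).trans ?_
        have hcxc : c * x ≤ c := mul_le_of_le_one_right hc hx.2
        gcongr
    _ = c ^ n / n ! := by rw [mul_comm, mul_assoc, ← exp_add, add_neg_cancel, exp_zero, mul_one]

theorem exists_bounded_approx_of_pow_div_factorial_le {c ε : ℝ} (hc : 0 ≤ c) {d : ℕ}
    (h : c ^ (d + 1) / (d + 1)! ≤ ε) :
    ∃ p : ℝ[X], p.natDegree ≤ d ∧ (∀ x ∈ Set.Icc (-1 : ℝ) 1, |p.eval x| ≤ 1) ∧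
      ∀ x ∈ Set.Icc (0 : ℝ) 1, |p.eval x - exp (c * (x - 1))| ≤ ε :=
  ⟨expTaylor c (d + 1), natDegree_expTaylor_le c d,
    fun _ hx => abs_eval_expTaylor_le_one hc (abs_le.mpr hx) _,
    fun _ hx => (abs_eval_expTaylor_sub_le hc hx _).trans h⟩

theorem dstar_le_of_pow_div_factorial_le {c ε : ℝ} (hc : 0 ≤ c) {d : ℕ}
    (h : c ^ (d + 1) / (d + 1)! ≤ ε) : dstar c ε ≤ d :=
  Nat.sInf_le (exists_bounded_approx_of_pow_div_factorial_le hc h)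

theorem exists_approx_natDegree_le_dstar {c ε : ℝ} (hc : 0 ≤ c) (hε : 0 < ε) :
    ∃ p : ℝ[X], p.natDegree ≤ dstar c ε ∧
      ∀ x ∈ Set.Icc (0 : ℝ) 1, |p.eval x - exp (c * (x - 1))| ≤ ε := by
  obtain ⟨d, hd⟩ := ((FloorSemiring.tendsto_pow_div_factorial_atTop c).eventually
    (eventually_le_nhds hε)).exists_forall_of_atTop
  obtain ⟨p, hp, -, happrox⟩ : dstar c ε ∈ _ :=
    Nat.sInf_mem ⟨d, exists_bounded_approx_of_pow_div_factorial_le hc (hd (d + 1) d.le_succ)⟩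
  exact ⟨p, hp, happrox⟩

theorem pow_div_factorial_le_exp_neg_mul_log {c : ℝ} (hc : 0 < c) {n : ℕ} (hn : 0 < n) :
    c ^ n / n ! ≤ exp (-(n * log (n / (c * exp 1)))) := by
  have hn' : (0 : ℝ) < n := Nat.cast_pos.mpr hn
  rw [exp_neg, exp_nat_mul, exp_log (by positivity), div_pow, inv_div, mul_pow, ← exp_nat_mul,
    mul_one]
  calc c ^ n / n ! = c ^ n * ((n : ℝ) ^ n / n !) / (n : ℝ) ^ n := by field_simp
    _ ≤ c ^ n * exp n / (n : ℝ) ^ n := by gcongr; exact pow_div_factorial_le_exp _ hn'.le n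

theorem dstar_exp_neg_le {c t : ℝ} (hc : 0 < c) {d : ℕ}
    (ht : t ≤ (d + 1) * log ((d + 1) / (c * exp 1))) : dstar c (exp (-t)) ≤ d := by
  refine dstar_le_of_pow_div_factorial_le hc.le ((pow_div_factorial_le_exp_neg_mul_log hc
    d.succ_pos).trans (exp_le_exp.mpr (neg_le_neg ?_)))
  push_cast
  exact ht

theorem le_mul_log_dstar_exp_neg {c : ℝ} (hc : 0 < c) (t : ℝ) :
    t ≤ (dstar c (exp (-t)) + 1) * log ((dstar c (exp (-t)) + 1) / (c / 2)) + c := by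
  obtain ⟨p, hp, happrox⟩ := exists_approx_natDegree_le_dstar hc.le (exp_pos (-t))
  set n : ℕ := dstar c (exp (-t)) + 1 with hn
  have hn' : (0 : ℝ) < n := by positivity
  have hdiff := exp_neg_mul_exp_div_sub_one_pow_le_of_approx (n := n) (Nat.succ_pos _)
    (Nat.lt_succ_of_le hp) happrox
  have hpow : exp (-c) * (c / n) ^ n ≤ 2 ^ n * exp (-t) := by
    refine le_trans ?_ hdiff
    gcongr
    linarith [add_one_le_exp (c / n)]
  have hlog := log_le_log (by positivity) hpow
  rw [log_mul (exp_pos _).ne' (by positivity), log_mul (by positivity) (exp_pos _).ne', log_exp,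
    log_exp, log_pow, log_pow, log_div hc.ne' hn'.ne'] at hlog
  rw [show ((dstar c (exp (-t)) : ℝ) + 1) = n by push_cast [hn]; rfl,
    log_div hn'.ne' (by positivity), log_div hc.ne' two_ne_zero]
  linarith

theorem tendsto_log_div_self_atTop : Tendsto (fun t => log t / t) atTop (𝓝 0) := by
  simpa using isLittleO_log_id_atTop.tendsto_div_nhds_zero

theorem tendsto_mul_log_div_add_div {σ a : ℝ} (hσ : 0 < σ) (ha : 0 < a) (b : ℝ) :
    Tendsto (fun t => (σ * t / log t * log (σ * t / log t / a) + b) / t) atTop (𝓝 σ) := by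
  have hlim : Tendsto (fun t => σ * (1 + ((log σ - log a) / log t - log (log t) / log t)) + b / t)
      atTop (𝓝 (σ * (1 + (0 - 0)) + 0)) :=
    ((tendsto_const_nhds.add (((tendsto_const_nhds.div_atTop tendsto_id).sub
      tendsto_log_div_self_atTop).comp tendsto_log_atTop)).const_mul σ).add
      (tendsto_const_nhds.div_atTop tendsto_id)
  simp only [sub_self, add_zero, mul_one] at hlim
  refine hlim.congr' ?_
  filter_upwards [eventually_gt_atTop 1] with t ht
  have hL : 0 < log t := log_pos ht
  have ht0 : 0 < t := by linarith
  rw [log_div (by positivity) ha.ne', log_div (by positivity) hL.ne', log_mul hσ.ne' ht0.ne']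
  field_simp
  ring

theorem mul_log_div_le_mul_log_div {a x y : ℝ} (ha : 0 < a) (hx : 0 < x) (hxy : x ≤ y)
    (hay : a ≤ y) : x * log (x / a) ≤ y * log (y / a) :=
  calc x * log (x / a) ≤ x * log (y / a) := by gcongr
    _ ≤ y * log (y / a) := by gcongr; exact log_nonneg ((one_le_div ha).mpr hay)

theorem le_of_mul_log_div_pos {a m : ℝ} (ha : 0 < a) (hm : 0 < m) (h : 0 < m * log (m / a)) :
    a ≤ m := by
  by_contra! hma
  exact h.not_ge (mul_nonpos_of_nonneg_of_nonpos hm.le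
    (log_nonpos (by positivity) ((div_le_one ha).mpr hma.le)))

theorem eventually_dstar_exp_neg_le {c σ : ℝ} (hc : 0 < c) (hσ : 1 < σ) :
    ∀ᶠ t in atTop, (dstar c (exp (-t)) : ℝ) ≤ σ * t / log t := by
  have ha : 0 < c * exp 1 := by positivity
  filter_upwards [(tendsto_mul_log_div_add_div (by linarith) ha 0).eventually (lt_mem_nhds hσ),
    eventually_gt_atTop 1] with t hratio ht
  set m := σ * t / log t
  have ht0 : 0 < t := by linarith
  have hm : 0 < m := by have := log_pos ht; positivity
  have htm : t < m * log (m / (c * exp 1)) := by rwa [add_zero, one_lt_div ht0] at hratio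
  have ham : c * exp 1 ≤ m := le_of_mul_log_div_pos ha hm (ht0.trans htm)
  have hfloor : m ≤ ⌊m⌋₊ + 1 := (Nat.lt_floor_add_one m).le
  calc (dstar c (exp (-t)) : ℝ) ≤ ⌊m⌋₊ := Nat.cast_le.mpr <| dstar_exp_neg_le hc <|
        htm.le.trans (mul_log_div_le_mul_log_div ha hm hfloor (ham.trans hfloor))
    _ ≤ m := Nat.floor_le hm.le

theorem eventually_le_dstar_exp_neg_add_one {c ρ : ℝ} (hc : 0 < c) (hρ0 : 0 < ρ) (hρ1 : ρ < 1) :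
    ∀ᶠ t in atTop, ρ * t / log t ≤ dstar c (exp (-t)) + 1 := by
  have ha : 0 < c / 2 := by positivity
  filter_upwards [(tendsto_mul_log_div_add_div hρ0 ha c).eventually (gt_mem_nhds hρ1),
    (tendsto_mul_log_div_add_div hρ0 ha 0).eventually (lt_mem_nhds hρ0),
    eventually_gt_atTop 1] with t hratio hpos ht
  set m := ρ * t / log t
  have ht0 : 0 < t := by linarith
  have hm : 0 < m := by have := log_pos ht; positivity
  have hmt : m * log (m / (c / 2)) + c < t := by rwa [div_lt_one ht0] at hratio
  have ham : c / 2 ≤ m :=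
    le_of_mul_log_div_pos ha hm (by rwa [add_zero, div_pos_iff_of_pos_right ht0] at hpos)
  by_contra! hlt
  have := mul_log_div_le_mul_log_div ha (by positivity) hlt.le ham
  linarith [le_mul_log_dstar_exp_neg hc t]

theorem tendsto_dstar_exp_neg_mul_log_div {c : ℝ} (hc : 0 < c) :
    Tendsto (fun t => (dstar c (exp (-t)) : ℝ) * log t / t) atTop (𝓝 1) := by
  refine tendsto_order.2 ⟨fun a ha => ?_, fun b hb => ?_⟩
  · obtain ⟨ρ, haρ, hρ1⟩ := exists_between (max_lt ha one_pos)
    have hρ0 : 0 < ρ := (le_max_right a 0).trans_lt haρ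
    have hgap : 0 < ρ - a := sub_pos.mpr ((le_max_left a 0).trans_lt haρ)
    filter_upwards [eventually_le_dstar_exp_neg_add_one hc hρ0 hρ1,
      tendsto_log_div_self_atTop.eventually (gt_mem_nhds hgap), eventually_gt_atTop 1]
      with t hlow hsmall ht
    have hL : 0 < log t := log_pos ht
    have ht0 : 0 < t := by linarith
    have hρle : ρ ≤ (dstar c (exp (-t)) * log t / t) + log t / t := by
      rw [← add_div, ← add_one_mul, le_div_iff₀ ht0, ← div_le_iff₀ hL]
      exact hlow
    linarith
  · obtain ⟨σ, h1σ, hσb⟩ := exists_between hb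
    filter_upwards [eventually_dstar_exp_neg_le hc h1σ, eventually_gt_atTop 1] with t hup ht
    have hL : 0 < log t := log_pos ht
    calc (dstar c (exp (-t)) : ℝ) * log t / t ≤ σ * t / log t * log t / t := by gcongr
      _ = σ := by field_simp
      _ < b := hσb

/-- Tight `log / log log` asymptotics: for fixed `c > 0`,
`d*(c,ε) = (log(1/ε) / log log(1/ε)) (1 + o(1))` as `ε → 0⁺`, i.e. the quotient
`d*(c,ε) · log log (1/ε) / log (1/ε)` tends to `1`. -/
theorem stmt7 (c : ℝ) (hc : 0 < c) :
    Filter.Tendsto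
      (fun ε : ℝ => (dstar c ε : ℝ) * Real.log (Real.log (1 / ε)) / Real.log (1 / ε))
      (nhdsWithin 0 (Set.Ioi 0)) (nhds 1) := by
  have hlog : Tendsto (fun ε : ℝ => log (1 / ε)) (𝓝[>] 0) atTop := by
    refine (tendsto_log_atTop.comp tendsto_inv_nhdsGT_zero).congr fun ε => ?_
    simp
  refine ((tendsto_dstar_exp_neg_mul_log_div hc).comp hlog).congr' ?_
  filter_upwards [self_mem_nhdsWithin] with ε (hε : 0 < ε)
  simp only [Function.comp_apply, one_div, log_inv, neg_neg, exp_log hε]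
end

section
/- For all real numbers x, y with 0 ≤ x ≤ y and every natural number M, the Poisson upper tail is monotone in its mean: ∑_{k=M+1}^{∞} e^{-x}·x^k/k! ≤ ∑_{k=M+1}^{∞} e^{-y}·y^k/k!. Equivalently, the partial sum ∑_{k=0}^{M} e^{-t}·t^k/k! is nonincreasing in t ≥ 0. -/
/-!
Since `d/dt (e^{-t} t^{k+1}/(k+1)!) = e^{-t} t^k/k! - e^{-t} t^{k+1}/(k+1)!`, the derivative of
the partial sum `∑_{k ≤ M} e^{-t} t^k/k!` telescopes to `-e^{-t} t^M/M! ≤ 0` for `t ≥ 0`. The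
full series sums to `e^{-t} e^t = 1`, so the upper tail is one minus this antitone partial sum.
-/

open Real Finset

noncomputable def poissonTerm (t : ℝ) (k : ℕ) : ℝ :=
  exp (-t) * t ^ k / k.factorial

lemma hasSum_poissonTerm (t : ℝ) : HasSum (poissonTerm t) 1 := by
  have h := (NormedSpace.expSeries_div_hasSum_exp t).mul_left (exp (-t))
  rw [← exp_eq_exp_ℝ, ← exp_add, neg_add_cancel, exp_zero] at h
  show HasSum (fun k => exp (-t) * t ^ k / k.factorial) 1
  simpa only [mul_div_assoc] using h

lemma hasSum_poissonTerm_tail (t : ℝ) (M : ℕ) :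
    HasSum (fun k => poissonTerm t (M + 1 + k)) (1 - ∑ k ∈ range (M + 1), poissonTerm t k) := by
  simp_rw [add_comm (M + 1)]
  exact (hasSum_nat_add_iff' (M + 1)).mpr (hasSum_poissonTerm t)

lemma hasDerivAt_poissonTerm_succ (t : ℝ) (k : ℕ) :
    HasDerivAt (poissonTerm · (k + 1)) (poissonTerm t k - poissonTerm t (k + 1)) t := by
  have h := (((hasDerivAt_neg t).exp).mul (hasDerivAt_pow (k + 1) t)).div_const
    ((k + 1).factorial : ℝ)
  refine h.congr_deriv ?_
  simp only [poissonTerm, Nat.factorial_succ, Nat.cast_mul, Nat.add_sub_cancel]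
  field_simp
  push_cast
  ring

lemma hasDerivAt_sum_poissonTerm (t : ℝ) (M : ℕ) :
    HasDerivAt (fun s => ∑ k ∈ range (M + 1), poissonTerm s k) (-poissonTerm t M) t := by
  induction M with
  | zero => simpa [poissonTerm] using (hasDerivAt_neg t).exp
  | succ M ih =>
    simp_rw [sum_range_succ _ (M + 1)]
    exact (ih.fun_add (hasDerivAt_poissonTerm_succ t M)).congr_deriv (by ring)

lemma antitoneOn_sum_poissonTerm (M : ℕ) :
    AntitoneOn (fun t => ∑ k ∈ range (M + 1), poissonTerm t k) (Set.Ici 0) := by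
  refine antitoneOn_of_hasDerivWithinAt_nonpos (convex_Ici 0)
    (fun t _ => (hasDerivAt_sum_poissonTerm t M).continuousAt.continuousWithinAt)
    (fun t _ => (hasDerivAt_sum_poissonTerm t M).hasDerivWithinAt) ?_
  intro t ht
  rw [interior_Ici, Set.mem_Ioi] at ht
  have : 0 ≤ poissonTerm t M := by unfold poissonTerm; positivity
  linarith

/-- Monotonicity of the Poisson upper tail in its mean: for `0 ≤ x ≤ y` and any `M`,
`∑_{k=M+1}^∞ e^{-x} x^k / k! ≤ ∑_{k=M+1}^∞ e^{-y} y^k / k!`; equivalently, the partial sum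
`∑_{k=0}^M e^{-t} t^k / k!` is nonincreasing in `t ≥ 0`. -/
theorem stmt10 (x y : ℝ) (hx : 0 ≤ x) (hxy : x ≤ y) (M : ℕ) :
    (∑' k : ℕ, Real.exp (-x) * x ^ (M + 1 + k) / ((M + 1 + k).factorial : ℝ)) ≤
      (∑' k : ℕ, Real.exp (-y) * y ^ (M + 1 + k) / ((M + 1 + k).factorial : ℝ)) ∧
    AntitoneOn (fun t : ℝ => ∑ k ∈ Finset.range (M + 1),
      Real.exp (-t) * t ^ k / (k.factorial : ℝ)) (Set.Ici 0) := by
  refine ⟨?_, antitoneOn_sum_poissonTerm M⟩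
  change ∑' k, poissonTerm x (M + 1 + k) ≤ ∑' k, poissonTerm y (M + 1 + k)
  rw [(hasSum_poissonTerm_tail x M).tsum_eq, (hasSum_poissonTerm_tail y M).tsum_eq]
  have := antitoneOn_sum_poissonTerm M (Set.mem_Ici.2 hx) (Set.mem_Ici.2 (hx.trans hxy)) hxy
  linarith
end

section
/- Let H_R and H_I be Hermitian n×n complex matrices with H_I positive semidefinite, let β := λ_max(H_I) be the largest eigenvalue of H_I, and let ω := max{Im λ : λ an eigenvalue of H_R + iH_I} be the spectral abscissa (in the imaginary direction) of H_eff = H_R + iH_I. Then ω = β if and only if there exists a nonzero vector ψ ∈ ℂⁿ and a real number a such that H_I ψ = β·ψ and H_R ψ = a·ψ, i.e. if and only if H_R and H_I share an eigenvector lying in the β-eigenspace of H_I. -/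
open scoped ComplexOrder

/-- The imaginary spectral abscissa `ω(A) = max {Im λ : λ ∈ spec A}` of a square complex
matrix. -/
noncomputable def imSpectralAbscissa (n : ℕ) (A : Matrix (Fin n) (Fin n) ℂ) : ℝ :=
  sSup (Complex.im '' spectrum ℂ A)

/-!
For a unit eigenvector `ψ` of `H_R + i H_I` with eigenvalue `λ`, taking imaginary parts in
`⟪ψ, (H_R + i H_I) ψ⟫ = λ` gives `Im λ = ⟪ψ, H_I ψ⟫ ≤ β`, because `β • 1 - H_I` is positive
semidefinite. The spectrum being finite, `ω = β` means that equality holds for some eigenpair,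
i.e. `⟪ψ, (β • 1 - H_I) ψ⟫ = 0`; for a positive semidefinite matrix this forces
`(β • 1 - H_I) ψ = 0`, and then `H_R ψ = (λ - i β) ψ = (Re λ) ψ`.
-/

open scoped MatrixOrder InnerProductSpace
open Matrix RCLike

theorem csSup_eq_iff_mem_of_forall_le {α : Type*} [ConditionallyCompleteLinearOrder α]
    {s : Set α} {b : α} (hs : s.Finite) (hne : s.Nonempty) (hle : ∀ y ∈ s, y ≤ b) :
    sSup s = b ↔ b ∈ s :=
  ⟨fun h => h ▸ hne.csSup_mem hs, fun h => IsGreatest.csSup_eq ⟨h, hle⟩⟩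

theorem Matrix.spectrum_nonempty {K ι : Type*} [Field K] [IsAlgClosed K] [Fintype ι]
    [DecidableEq ι] [Nonempty ι] (A : Matrix ι ι K) : (spectrum K A).Nonempty := by
  obtain ⟨μ, hμ⟩ := Module.End.exists_eigenvalue (toLin' A)
  exact ⟨μ, spectrum_toLin' A ▸ hμ.mem_spectrum⟩

theorem LinearMap.IsSymmetric.im_mul_norm_sq_eq_re_inner {E : Type*} [NormedAddCommGroup E]
    [InnerProductSpace ℂ E] {S T : E →ₗ[ℂ] E} (hS : S.IsSymmetric) {μ : ℂ} {x : E}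
    (h : (S + Complex.I • T) x = μ • x) : μ.im * ‖x‖ ^ 2 = re ⟪x, T x⟫_ℂ := by
  have hSx : (⟪x, S x⟫_ℂ).im = 0 := hS.im_inner_self_apply x
  have := congrArg (fun y => im ⟪x, y⟫_ℂ) h
  simpa [inner_add_right, inner_smul_right, inner_self_eq_norm_sq_to_K, hSx,
    ← Complex.ofReal_pow] using this.symm

section RCLike

variable {𝕜 ι : Type*} [RCLike 𝕜] [Fintype ι] [DecidableEq ι]

theorem Matrix.mem_spectrum_iff_exists_toEuclideanLin_eq_smul {A : Matrix ι ι 𝕜} {μ : 𝕜} :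
    μ ∈ spectrum 𝕜 A ↔ ∃ x ≠ 0, toEuclideanLin A x = μ • x := by
  rw [← spectrum_toLpLin 2, ← Module.End.hasEigenvalue_iff_mem_spectrum,
    Module.End.hasEigenvalue_iff, Submodule.ne_bot_iff]
  simp only [Module.End.mem_eigenspace_iff]
  exact exists_congr fun x => and_comm

theorem Matrix.PosSemidef.inner_toEuclideanLin_self_eq_zero_iff {M : Matrix ι ι 𝕜}
    (hM : M.PosSemidef) (x : EuclideanSpace 𝕜 ι) :
    ⟪x, toEuclideanLin M x⟫_𝕜 = 0 ↔ toEuclideanLin M x = 0 := by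
  rw [EuclideanSpace.inner_eq_star_dotProduct, ofLp_toLpLin, toLin'_apply, dotProduct_comm,
    hM.dotProduct_mulVec_zero_iff, toLpLin_apply, WithLp.toLp_eq_zero]

theorem Matrix.toEuclideanLin_smul_one_sub_apply (c : 𝕜) (A : Matrix ι ι 𝕜)
    (x : EuclideanSpace 𝕜 ι) :
    toEuclideanLin (c • 1 - A) x = c • x - toEuclideanLin A x := by
  simp [toLpLin_one]

namespace Matrix.IsHermitian

variable {A : Matrix ι ι 𝕜}

theorem posSemidef_iSup_eigenvalues_smul_one_sub (hA : A.IsHermitian) :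
    (((⨆ i, hA.eigenvalues i : ℝ) : 𝕜) • (1 : Matrix ι ι 𝕜) - A).PosSemidef := by
  have h : A ≤ algebraMap ℝ (Matrix ι ι 𝕜) (⨆ i, hA.eigenvalues i) := by
    refine le_algebraMap_of_spectrum_le (fun x hx => ?_) hA.isSelfAdjoint
    obtain ⟨i, rfl⟩ := hA.spectrum_real_eq_range_eigenvalues ▸ hx
    exact le_ciSup (Set.finite_range _).bddAbove i
  rw [Matrix.le_iff, Algebra.algebraMap_eq_smul_one] at h
  simpa using h

theorem re_inner_toEuclideanLin_le (hA : A.IsHermitian) (x : EuclideanSpace 𝕜 ι) :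
    re ⟪x, toEuclideanLin A x⟫_𝕜 ≤ (⨆ i, hA.eigenvalues i) * ‖x‖ ^ 2 := by
  have := (isPositive_toEuclideanLin_iff.mpr
    hA.posSemidef_iSup_eigenvalues_smul_one_sub).re_inner_nonneg_right x
  rw [toEuclideanLin_smul_one_sub_apply, inner_sub_right, inner_smul_right,
    inner_self_eq_norm_sq_to_K, ← ofReal_pow, ← ofReal_mul, map_sub, ofReal_re] at this
  linarith

theorem toEuclideanLin_eq_iSup_smul_of_re_inner_eq (hA : A.IsHermitian) {x : EuclideanSpace 𝕜 ι}
    (h : re ⟪x, toEuclideanLin A x⟫_𝕜 = (⨆ i, hA.eigenvalues i) * ‖x‖ ^ 2) :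
    toEuclideanLin A x = ((⨆ i, hA.eigenvalues i : ℝ) : 𝕜) • x := by
  have hzero : ⟪x, toEuclideanLin (((⨆ i, hA.eigenvalues i : ℝ) : 𝕜) • 1 - A) x⟫_𝕜 = 0 := by
    rw [toEuclideanLin_smul_one_sub_apply, inner_sub_right, inner_smul_right,
      inner_self_eq_norm_sq_to_K,
      ← (isSymmetric_toEuclideanLin_iff.mpr hA).coe_re_inner_self_apply, h]
    push_cast
    ring
  rw [hA.posSemidef_iSup_eigenvalues_smul_one_sub.inner_toEuclideanLin_self_eq_zero_iff,
    toEuclideanLin_smul_one_sub_apply, sub_eq_zero] at hzero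
  exact hzero.symm

end Matrix.IsHermitian

end RCLike

section SpectralAbscissa

variable {ι : Type*} [Fintype ι] [DecidableEq ι] {HR HI : Matrix ι ι ℂ}

theorem im_le_iSup_eigenvalues_of_mem_spectrum_add_I_smul (hHR : HR.IsHermitian)
    (hHI : HI.IsHermitian) {μ : ℂ} (hμ : μ ∈ spectrum ℂ (HR + Complex.I • HI)) :
    μ.im ≤ ⨆ i, hHI.eigenvalues i := by
  obtain ⟨x, hx, hμx⟩ := mem_spectrum_iff_exists_toEuclideanLin_eq_smul.mp hμ
  rw [map_add, map_smul] at hμx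
  have him := (isSymmetric_toEuclideanLin_iff.mpr hHR).im_mul_norm_sq_eq_re_inner hμx
  have hpos : 0 < ‖x‖ ^ 2 := by positivity
  exact le_of_mul_le_mul_right (him ▸ hHI.re_inner_toEuclideanLin_le x) hpos

theorem iSup_eigenvalues_mem_im_spectrum_add_I_smul_iff (hHR : HR.IsHermitian)
    (hHI : HI.IsHermitian) :
    (⨆ i, hHI.eigenvalues i) ∈ Complex.im '' spectrum ℂ (HR + Complex.I • HI) ↔
      ∃ ψ : EuclideanSpace ℂ ι, ψ ≠ 0 ∧ ∃ a : ℝ,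
        toEuclideanLin HI ψ = ((⨆ i, hHI.eigenvalues i : ℝ) : ℂ) • ψ ∧
        toEuclideanLin HR ψ = (a : ℂ) • ψ := by
  set β := ⨆ i, hHI.eigenvalues i
  constructor
  · rintro ⟨μ, hμ, hμβ⟩
    obtain ⟨x, hx, hμx⟩ := mem_spectrum_iff_exists_toEuclideanLin_eq_smul.mp hμ
    rw [map_add, map_smul] at hμx
    have hre : re ⟪x, toEuclideanLin HI x⟫_ℂ = β * ‖x‖ ^ 2 :=
      hμβ ▸ ((isSymmetric_toEuclideanLin_iff.mpr hHR).im_mul_norm_sq_eq_re_inner hμx).symm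
    have hHIx : toEuclideanLin HI x = (β : ℂ) • x :=
      hHI.toEuclideanLin_eq_iSup_smul_of_re_inner_eq hre
    refine ⟨x, hx, μ.re, hHIx, ?_⟩
    rw [LinearMap.add_apply, LinearMap.smul_apply, hHIx, smul_smul, ← eq_sub_iff_add_eq] at hμx
    rw [hμx, ← sub_smul]
    congr 1
    apply Complex.ext <;> simp [hμβ]
  · rintro ⟨ψ, hψ, a, hHIψ, hHRψ⟩
    refine ⟨a + Complex.I * β, mem_spectrum_iff_exists_toEuclideanLin_eq_smul.mpr ⟨ψ, hψ, ?_⟩,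
      by simp⟩
    rw [map_add, map_smul, LinearMap.add_apply, LinearMap.smul_apply, hHIψ, hHRψ, smul_smul,
      add_smul]

end SpectralAbscissa

theorem stmt17_general (n : ℕ) (hn : 0 < n) (HR HI : Matrix (Fin n) (Fin n) ℂ)
    (hHR : HR.IsHermitian) (hHI : HI.IsHermitian) :
    imSpectralAbscissa n (HR + Complex.I • HI) = (⨆ i, hHI.eigenvalues i) ↔
      ∃ ψ : EuclideanSpace ℂ (Fin n), ψ ≠ 0 ∧ ∃ a : ℝ,
        Matrix.toEuclideanLin HI ψ = ((⨆ i, hHI.eigenvalues i : ℝ) : ℂ) • ψ ∧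
        Matrix.toEuclideanLin HR ψ = (a : ℂ) • ψ := by
  have : Nonempty (Fin n) := ⟨⟨0, hn⟩⟩
  rw [imSpectralAbscissa, csSup_eq_iff_mem_of_forall_le ((finite_spectrum _).image _)
    ((spectrum_nonempty _).image _)]
  · exact iSup_eigenvalues_mem_im_spectrum_add_I_smul_iff hHR hHI
  · rintro _ ⟨μ, hμ, rfl⟩
    exact im_le_iSup_eigenvalues_of_mem_spectrum_add_I_smul hHR hHI hμ

/-- Equality case `ω = β` of the spectral-abscissa bound: for Hermitian `H_R, H_I` with
`H_I ⪰ 0` and `β = λ_max(H_I)`, the imaginary spectral abscissa `ω` of `H_R + i H_I`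
equals `β` iff `H_R` and `H_I` share an eigenvector lying in the `β`-eigenspace of `H_I`. -/
theorem stmt17 (n : ℕ) (hn : 0 < n) (HR HI : Matrix (Fin n) (Fin n) ℂ)
    (hHR : HR.IsHermitian) (hHI : HI.IsHermitian) (hpsd : HI.PosSemidef) :
    imSpectralAbscissa n (HR + Complex.I • HI) = (⨆ i, hHI.eigenvalues i) ↔
      ∃ ψ : EuclideanSpace ℂ (Fin n), ψ ≠ 0 ∧ ∃ a : ℝ,
        Matrix.toEuclideanLin HI ψ = ((⨆ i, hHI.eigenvalues i : ℝ) : ℂ) • ψ ∧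
        Matrix.toEuclideanLin HR ψ = (a : ℂ) • ψ :=
  stmt17_general n hn HR HI hHR hHI
end
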